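/- For every integer n ≥ 1 and every integer r with 2 ≤ r ≤ n+1, setting m = n+2 and E_m(r) = (m−r)·(m+r−2)·(2(m−1)²+2(r−1)²−1), the coefficient C_{n,r} satisfies C_{n,r} = −8·[N!·(m+r−3)!·(m−r−1)!]²·E_m(r), where N = 2n. Consequently, for every odd prime p, v_p(C_{n,r}) ≡ v_p(E_m(r)) (mod 2). -/

import Mathlib

open MvPolynomial Finset

/-- `alph n i = (2n+1-i)! * i!` -/
def alph (n i : ℕ) : ℕ := (2*n+1-i).factorial * i.factorial

/-- `bet n i = (2n-i)! * (i+1)!` -/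
def bet (n i : ℕ) : ℕ := (2*n-i).factorial * (i+1).factorial

/-- The coefficient `A_n` of `x^2` in the quadratic covariant `Q_n = (F,F)_{2n}`. -/
noncomputable def An (n : ℕ) : MvPolynomial ℕ ℤ :=
  ∑ i ∈ Finset.range (2*n+1),
    MvPolynomial.C ((-1 : ℤ)^i * ((2*n).choose i : ℤ) * (alph n i : ℤ) * (bet n i : ℤ)) *
      X i * X (2*n - i)

/-- The coefficient `B_n` of `xz` in the quadratic covariant `Q_n = (F,F)_{2n}`. -/
noncomputable def Bn (n : ℕ) : MvPolynomial ℕ ℤ :=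
  ∑ i ∈ Finset.range (2*n+1),
    MvPolynomial.C ((-1 : ℤ)^i * ((2*n).choose i : ℤ)) *
      (MvPolynomial.C ((alph n i : ℤ)^2) * X i * X (2*n+1-i) +
       MvPolynomial.C ((bet n i : ℤ)^2) * X (i+1) * X (2*n-i))

/-- The coefficient `C_n` of `z^2` in the quadratic covariant `Q_n = (F,F)_{2n}`. -/
noncomputable def Cpoly (n : ℕ) : MvPolynomial ℕ ℤ :=
  ∑ i ∈ Finset.range (2*n+1),
    MvPolynomial.C ((-1 : ℤ)^i * ((2*n).choose i : ℤ) * (alph n i : ℤ) * (bet n i : ℤ)) *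
      X (i+1) * X (2*n+1-i)

/-- The discriminant `Δ_n = B_n² − 4 A_n C_n` of the quadratic covariant. -/
noncomputable def Δn (n : ℕ) : MvPolynomial ℕ ℤ := Bn n ^ 2 - 4 * An n * Cpoly n

/-- `S(n)`: the content of `Δ_n`, i.e. the gcd of all its integer coefficients. -/
noncomputable def Sn (n : ℕ) : ℤ :=
  (Δn n).support.gcd (fun m => MvPolynomial.coeff m (Δn n))

/-- `E_m(r) = (m−r)(m+r−2)(2(m−1)²+2(r−1)²−1)`. -/
def Efun (m r : ℤ) : ℤ := (m - r) * (m + r - 2) * (2*(m-1)^2 + 2*(r-1)^2 - 1)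

/-! `A_n`, `B_n`, `C_n` are isobaric quadratic forms `∑_k c_k f_k f_{s-k}` of weights `2n`,
`2n+1`, `2n+2` (`C_n` is `A_n` with all indices shifted by one), and their coefficients have
closed forms: `u_k = (-1)^k (2n)! (2n+1-k)! (k+1)!` for `A_n` and
`w_k = (-1)^k (2n)! (2n+1-k)! k! (2n+1-2k)` for `B_n`. With `A = n+1-r`, `B = n-1+r`
(so `A + B = 2n`, `A + 2 ≤ B`), the monomial `f_A f_{A+1} f_B f_{B+1}` splits into quadratic
monomials of the right weights only as `f_A f_B · f_{A+1} f_{B+1}` in `A_n C_n` and as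
`f_A f_{B+1} · f_{A+1} f_B` in `B_n²`, so
`C_{n,r} = 2 (w_A + w_{B+1}) (w_{A+1} + w_B) - 4 (u_A + u_B)²`, which simplifies to
`-8 ((2n)! A! B!)² (A+1)(B+1)((A+1)² + (B+1)² - 1)`. Since `-8` is a `p`-adic unit for odd `p`,
the valuations of `C_{n,r}` and `E_m(r)` differ by an even number. -/

namespace MvPolynomial

variable {R : Type*} [CommSemiring R]

theorem C_mul_X_mul_X {σ : Type*} (c : R) (i j : σ) :
    C c * X i * X j = monomial (Finsupp.single i 1 + Finsupp.single j 1) c := by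
  rw [C_mul_X_eq_monomial, X, monomial_mul, mul_one]

noncomputable def pairForm (s : ℕ) (c : ℕ → R) : MvPolynomial ℕ R :=
  ∑ k ∈ range (s + 1), monomial (Finsupp.single k 1 + Finsupp.single (s - k) 1) (c k)

theorem pairForm_add (s : ℕ) (c d : ℕ → R) :
    pairForm s (c + d) = pairForm s c + pairForm s d := by
  simp only [pairForm, Pi.add_apply, map_add, sum_add_distrib]

theorem coeff_pairForm {s i j : ℕ} (c : ℕ → R) (hij : i ≠ j) (hs : i + j = s) :
    coeff (Finsupp.single i 1 + Finsupp.single j 1) (pairForm s c) = c i + c j := by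
  have hpair : ∀ k, (Finsupp.single k 1 + Finsupp.single (s - k) 1 =
      Finsupp.single i 1 + Finsupp.single j (1 : ℕ)) ↔ k = i ∨ k = j := fun k => by
    rw [Finsupp.single_add_single_eq_single_add_single one_ne_zero one_ne_zero]
    omega
  simp only [pairForm, coeff_sum, coeff_monomial, hpair]
  rw [sum_ite, sum_const_zero, add_zero, Finset.filter_or, sum_union, filter_eq', filter_eq',
    if_pos (mem_range.2 (by omega)), if_pos (mem_range.2 (by omega)), sum_singleton, sum_singleton]
  rw [Finset.disjoint_left]
  simp only [mem_filter]
  omega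

theorem coeff_pairForm_mul (s : ℕ) (c : ℕ → R) (m : ℕ →₀ ℕ) (q : MvPolynomial ℕ R) :
    coeff m (pairForm s c * q) =
      ∑ k ∈ range (s + 1), if Finsupp.single k 1 + Finsupp.single (s - k) 1 ≤ m then
        c k * coeff (m - (Finsupp.single k 1 + Finsupp.single (s - k) 1)) q else 0 := by
  simp only [pairForm, sum_mul, coeff_sum, coeff_monomial_mul']

theorem coeff_rename_add_one (p : MvPolynomial ℕ R) (i j : ℕ) :
    coeff (Finsupp.single (i + 1) 1 + Finsupp.single (j + 1) 1) (rename (· + 1) p) =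
      coeff (Finsupp.single i 1 + Finsupp.single j 1) p := by
  rw [← coeff_rename_mapDomain _ (add_left_injective 1) p, Finsupp.mapDomain_add,
    Finsupp.mapDomain_single, Finsupp.mapDomain_single]

end MvPolynomial

open MvPolynomial Nat

open Finsupp in
noncomputable def adjacentPairs (A B : ℕ) : ℕ →₀ ℕ :=
  single A 1 + single (A + 1) 1 + single B 1 + single (B + 1) 1

open Finsupp in
theorem adjacentPairs_apply (A B x : ℕ) : adjacentPairs A B x =
    (if x = A then 1 else 0) + (if x = A + 1 then 1 else 0) + (if x = B then 1 else 0) +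
      (if x = B + 1 then 1 else 0) := by
  simp only [adjacentPairs, Finsupp.add_apply, single_apply, eq_comm]

open Finsupp in
theorem single_add_single_le_adjacentPairs {A B i j : ℕ} (hAB : A + 2 ≤ B) :
    single i 1 + single j 1 ≤ adjacentPairs A B ↔
      i ≠ j ∧ (i = A ∨ i = A + 1 ∨ i = B ∨ i = B + 1) ∧
        (j = A ∨ j = A + 1 ∨ j = B ∨ j = B + 1) := by
  have hval : ∀ x, (x = A ∨ x = A + 1 ∨ x = B ∨ x = B + 1) ↔ 0 < adjacentPairs A B x := by
    intro x; rw [adjacentPairs_apply]; split_ifs <;> omega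
  have hle : ∀ x, adjacentPairs A B x ≤ 1 := by
    intro x; rw [adjacentPairs_apply]; split_ifs <;> omega
  rw [hval, hval]
  constructor
  · intro h
    have hi := h i
    have hj := h j
    simp only [Finsupp.add_apply, single_eq_same] at hi hj
    refine ⟨fun hij => ?_, by omega, by omega⟩
    subst hij
    simp only [single_eq_same] at hi
    have := hle i
    omega
  · rintro ⟨hij, hi, hj⟩ x
    simp only [Finsupp.add_apply, single_apply]
    split_ifs <;> subst_vars <;> omega

theorem choose_mul_alph_mul_bet {n k : ℕ} (hk : k ≤ 2 * n) :
    (2 * n).choose k * alph n k * bet n k = (2 * n)! * (2 * n + 1 - k)! * (k + 1)! := by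
  rw [alph, bet, ← Nat.choose_mul_factorial_mul_factorial hk]
  ring

theorem choose_mul_alph_sq {n k : ℕ} (hk : k ≤ 2 * n) :
    (2 * n).choose k * alph n k ^ 2 = (2 * n)! * (2 * n + 1 - k) * (2 * n + 1 - k)! * k ! := by
  rw [alph, show 2 * n + 1 - k = (2 * n - k) + 1 by omega, Nat.factorial_succ,
    ← Nat.choose_mul_factorial_mul_factorial hk]
  ring

theorem choose_mul_bet_sq {n k : ℕ} (hk : k ≤ 2 * n) :
    (2 * n).choose k * bet n k ^ 2 = (2 * n)! * (k + 1) * (2 * n - k)! * (k + 1)! := by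
  rw [bet, Nat.factorial_succ k, ← Nat.choose_mul_factorial_mul_factorial hk]
  ring

def aCoeff (n k : ℕ) : ℤ := (-1) ^ k * (2 * n)! * (2 * n + 1 - k)! * (k + 1)!

/-- The coefficient of `f_k f_{2n+1-k}` in `B_n`: the `α²`-term of index `k` plus the `β²`-term
of index `k - 1`, in closed form. -/
def bCoeff (n k : ℕ) : ℤ :=
  (-1) ^ k * (2 * n)! * (2 * n + 1 - k)! * k ! * ((2 * n + 1 - k : ℕ) - k)

theorem An_eq_pairForm (n : ℕ) : An n = pairForm (2 * n) (aCoeff n) := by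
  refine sum_congr rfl fun k hk => ?_
  have h : ((2 * n).choose k * alph n k * bet n k : ℤ) =
      (2 * n)! * (2 * n + 1 - k)! * (k + 1)! := by
    exact_mod_cast choose_mul_alph_mul_bet (Nat.lt_succ_iff.1 (mem_range.1 hk))
  rw [C_mul_X_mul_X, aCoeff]
  congr 1
  linear_combination (-1) ^ k * h

theorem Cpoly_eq_rename_An (n : ℕ) : Cpoly n = rename (· + 1) (An n) := by
  simp only [Cpoly, An, map_sum, map_mul, rename_C, rename_X]
  refine sum_congr rfl fun k hk => ?_
  rw [show 2 * n - k + 1 = 2 * n + 1 - k by have := mem_range.1 hk; omega]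

theorem Bn_eq_pairForm (n : ℕ) : Bn n = pairForm (2 * n + 1) (bCoeff n) := by
  let a : ℕ → ℤ := fun k =>
    ((-1) ^ k * (2 * n)! * (2 * n + 1 - k : ℕ) * (2 * n + 1 - k)! * k !)
  let b : ℕ → ℤ := fun k => -((-1) ^ k * (2 * n)! * k * (2 * n + 1 - k)! * k !)
  have hab : bCoeff n = a + b := by
    ext k; simp only [bCoeff, a, b, Pi.add_apply]; ring
  have ha : pairForm (2 * n + 1) a = ∑ i ∈ range (2 * n + 1),
      C ((-1) ^ i * ((2 * n).choose i : ℤ) * (alph n i : ℤ) ^ 2) * X i * X (2 * n + 1 - i) := by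
    rw [pairForm, sum_range_succ]
    simp only [a, Nat.sub_self, Nat.cast_zero, mul_zero, zero_mul, map_zero, add_zero]
    refine sum_congr rfl fun k hk => ?_
    have h : ((2 * n).choose k * alph n k ^ 2 : ℤ) =
        (2 * n)! * (2 * n + 1 - k : ℕ) * (2 * n + 1 - k)! * k ! := by
      exact_mod_cast choose_mul_alph_sq (Nat.lt_succ_iff.1 (mem_range.1 hk))
    rw [C_mul_X_mul_X]
    congr 1
    linear_combination -(-1) ^ k * h
  have hb : pairForm (2 * n + 1) b = ∑ i ∈ range (2 * n + 1),
      C ((-1) ^ i * ((2 * n).choose i : ℤ) * (bet n i : ℤ) ^ 2) *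
        X (i + 1) * X (2 * n - i) := by
    rw [pairForm, sum_range_succ']
    simp only [b, Nat.cast_zero, mul_zero, zero_mul, neg_zero, map_zero, add_zero]
    refine sum_congr rfl fun k hk => ?_
    have h : ((2 * n).choose k * bet n k ^ 2 : ℤ) =
        (2 * n)! * (k + 1 : ℕ) * (2 * n - k)! * (k + 1)! := by
      exact_mod_cast choose_mul_bet_sq (Nat.lt_succ_iff.1 (mem_range.1 hk))
    rw [C_mul_X_mul_X, show 2 * n + 1 - (k + 1) = 2 * n - k by omega]
    congr 1
    linear_combination -(-1) ^ k * h
  rw [hab, pairForm_add, ha, hb, Bn, ← sum_add_distrib]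
  refine sum_congr rfl fun i _ => ?_
  simp only [C_mul]
  ring

theorem coeff_adjacentPairs_An_mul_Cpoly {n A B : ℕ} (hsum : A + B = 2 * n) (hgap : A + 2 ≤ B) :
    coeff (adjacentPairs A B) (An n * Cpoly n) = (aCoeff n A + aCoeff n B) ^ 2 := by
  have hmem : ∀ k ∈ range (2 * n + 1), Finsupp.single k 1 + Finsupp.single (2 * n - k) 1 ≤
      adjacentPairs A B ↔ k ∈ ({A, B} : Finset ℕ) := fun k hk => by
    rw [single_add_single_le_adjacentPairs hgap, mem_insert, mem_singleton]
    have := mem_range.1 hk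
    omega
  have hrest : ∀ k ∈ ({A, B} : Finset ℕ), adjacentPairs A B -
      (Finsupp.single k 1 + Finsupp.single (2 * n - k) 1) =
        Finsupp.single (A + 1) 1 + Finsupp.single (B + 1) 1 := fun k hk => by
    apply tsub_eq_of_eq_add_rev
    rcases mem_insert.1 hk with rfl | hk
    · rw [show 2 * n - k = B by omega, adjacentPairs]; abel
    · rw [mem_singleton.1 hk, show 2 * n - B = A by omega, adjacentPairs]; abel
  have hsub : ({A, B} : Finset ℕ) ⊆ range (2 * n + 1) := by
    intro k hk; simp only [mem_insert, mem_singleton] at hk; rw [mem_range]; omega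
  rw [An_eq_pairForm, coeff_pairForm_mul, sum_congr rfl fun k hk => if_congr (hmem k hk) rfl rfl,
    sum_ite_mem, inter_eq_right.2 hsub, sum_congr rfl fun k hk => by rw [hrest k hk],
    ← sum_mul, Cpoly_eq_rename_An, coeff_rename_add_one, An_eq_pairForm,
    coeff_pairForm _ (by omega) hsum, sum_pair (by omega), sq]

theorem coeff_adjacentPairs_Bn_sq {n A B : ℕ} (hsum : A + B = 2 * n) (hgap : A + 2 ≤ B) :
    coeff (adjacentPairs A B) (Bn n ^ 2) =
      2 * (bCoeff n A + bCoeff n (B + 1)) * (bCoeff n (A + 1) + bCoeff n B) := by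
  have hmem : ∀ k ∈ range (2 * n + 1 + 1),
      Finsupp.single k 1 + Finsupp.single (2 * n + 1 - k) 1 ≤ adjacentPairs A B ↔
        k ∈ ({A, A + 1, B, B + 1} : Finset ℕ) := fun k hk => by
    rw [single_add_single_le_adjacentPairs hgap]
    simp only [mem_insert, mem_singleton]
    have := mem_range.1 hk
    omega
  have hsub : ({A, A + 1, B, B + 1} : Finset ℕ) ⊆ range (2 * n + 1 + 1) := by
    intro k hk; simp only [mem_insert, mem_singleton] at hk; rw [mem_range]; omega
  have hAB : A + (B + 1) = 2 * n + 1 := by omega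
  have hBA : (A + 1) + B = 2 * n + 1 := by omega
  rw [sq, Bn_eq_pairForm, coeff_pairForm_mul,
    sum_congr rfl fun k hk => if_congr (hmem k hk) rfl rfl, sum_ite_mem, inter_eq_right.2 hsub,
    sum_insert (by simp only [mem_insert, mem_singleton]; omega),
    sum_insert (by simp only [mem_insert, mem_singleton]; omega), sum_pair (by omega),
    show 2 * n + 1 - A = B + 1 by omega, show 2 * n + 1 - (A + 1) = B by omega,
    show 2 * n + 1 - B = A + 1 by omega, show 2 * n + 1 - (B + 1) = A by omega]
  rw [tsub_eq_of_eq_add_rev (c := Finsupp.single (A + 1) 1 + Finsupp.single B 1)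
      (by rw [adjacentPairs]; abel),
    tsub_eq_of_eq_add_rev (c := Finsupp.single A 1 + Finsupp.single (B + 1) 1)
      (by rw [adjacentPairs]; abel),
    tsub_eq_of_eq_add_rev (c := Finsupp.single A 1 + Finsupp.single (B + 1) 1)
      (by rw [adjacentPairs]; abel),
    tsub_eq_of_eq_add_rev (c := Finsupp.single (A + 1) 1 + Finsupp.single B 1)
      (by rw [adjacentPairs]; abel),
    coeff_pairForm _ (by omega) hAB, coeff_pairForm _ (by omega) hBA]
  ring

theorem coeff_adjacentPairs_Δn {n A B : ℕ} (hsum : A + B = 2 * n) (hgap : A + 2 ≤ B) :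
    coeff (adjacentPairs A B) (Δn n) =
      -8 * ((2 * n)! * A ! * B ! : ℤ) ^ 2 *
        ((A + 1) * (B + 1) * ((A + 1) ^ 2 + (B + 1) ^ 2 - 1)) := by
  have h4 : (4 : MvPolynomial ℕ ℤ) * An n * Cpoly n = C 4 * (An n * Cpoly n) := by
    rw [mul_assoc]; rfl
  rw [Δn, h4, coeff_sub, coeff_C_mul, coeff_adjacentPairs_Bn_sq hsum hgap,
    coeff_adjacentPairs_An_mul_Cpoly hsum hgap]
  have hsign : (-1 : ℤ) ^ B = (-1) ^ A := by
    rw [show B = A + 2 * (n - A) by omega, pow_add, pow_mul, neg_one_sq, one_pow, mul_one]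
  simp only [aCoeff, bCoeff, show 2 * n + 1 - A = B + 1 by omega,
    show 2 * n + 1 - (A + 1) = B by omega, show 2 * n + 1 - B = A + 1 by omega,
    show 2 * n + 1 - (B + 1) = A by omega, pow_succ, hsign,
    Nat.factorial_succ]
  push_cast
  rcases neg_one_pow_eq_or ℤ A with h | h <;> rw [h] <;> ring

theorem padicValInt_mul_sq_mul_mod_two {p : ℕ} [Fact p.Prime] {c x e : ℤ}
    (hc : ¬ (p : ℤ) ∣ c) (hx : x ≠ 0) (he : e ≠ 0) :
    padicValInt p (c * x ^ 2 * e) % 2 = padicValInt p e % 2 := by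
  have hc0 : c ≠ 0 := by rintro rfl; exact hc (dvd_zero _)
  rw [padicValInt.mul (by positivity) he, padicValInt.mul hc0 (by positivity), sq,
    padicValInt.mul hx hx, padicValInt.eq_zero_of_not_dvd hc]
  omega

theorem not_dvd_neg_eight {p : ℕ} (hp : p.Prime) (hodd : Odd p) : ¬ (p : ℤ) ∣ -8 := by
  rw [dvd_neg, show (8 : ℤ) = ((2 ^ 3 : ℕ) : ℤ) by norm_num, Int.natCast_dvd_natCast]
  intro h
  obtain rfl := (Nat.prime_dvd_prime_iff_eq hp Nat.prime_two).1 (hp.dvd_of_dvd_pow h)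
  exact Nat.not_odd_iff_even.2 even_two hodd

theorem Efun_pos {m r : ℤ} (hrm : r < m) (hr : 2 ≤ r) : 0 < Efun m r := by
  have h3 : 0 < 2 * (m - 1) ^ 2 + 2 * (r - 1) ^ 2 - 1 := by nlinarith
  exact mul_pos (mul_pos (by omega) (by omega)) h3

theorem stmt3_general (n r : ℕ) (hr1 : 2 ≤ r) (hr2 : r ≤ n+1) :
    MvPolynomial.coeff
      (Finsupp.single (n+1-r) 1 + Finsupp.single (n+2-r) 1 +
       Finsupp.single (n-1+r) 1 + Finsupp.single (n+r) 1) (Δn n) =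
      -8 * (((2*n).factorial : ℤ) * ((n+r-1).factorial : ℤ) * ((n+1-r).factorial : ℤ))^2 *
        Efun (n+2) r ∧
    ∀ p : ℕ, p.Prime → Odd p →
      padicValInt p (MvPolynomial.coeff
        (Finsupp.single (n+1-r) 1 + Finsupp.single (n+2-r) 1 +
         Finsupp.single (n-1+r) 1 + Finsupp.single (n+r) 1) (Δn n)) % 2 =
      padicValInt p (Efun (n+2) r) % 2 := by
  rw [show n + r - 1 = n - 1 + r by omega, show n + 2 - r = n + 1 - r + 1 by omega,
    show n + r = n - 1 + r + 1 by omega]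
  have hcoeff :=
    coeff_adjacentPairs_Δn (n := n) (A := n + 1 - r) (B := n - 1 + r) (by omega) (by omega)
  rw [adjacentPairs] at hcoeff
  have hE : Efun (n + 2) r = ((n + 1 - r : ℕ) + 1) * ((n - 1 + r : ℕ) + 1) *
      (((n + 1 - r : ℕ) + 1) ^ 2 + ((n - 1 + r : ℕ) + 1) ^ 2 - 1 : ℤ) := by
    rw [Efun, show ((n + 1 - r : ℕ) : ℤ) = n + 1 - r by omega,
      show ((n - 1 + r : ℕ) : ℤ) = n - 1 + r by omega]
    ring
  refine ⟨by rw [hcoeff, hE]; ring, fun p hp hodd => ?_⟩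
  have := Fact.mk hp
  rw [hcoeff, ← hE]
  exact padicValInt_mul_sq_mul_mod_two (not_dvd_neg_eight hp hodd) (by positivity)
    (Efun_pos (by omega) (by omega)).ne'

theorem stmt3 (n r : ℕ) (hn : 1 ≤ n) (hr1 : 2 ≤ r) (hr2 : r ≤ n+1) :
    MvPolynomial.coeff
      (Finsupp.single (n+1-r) 1 + Finsupp.single (n+2-r) 1 +
       Finsupp.single (n-1+r) 1 + Finsupp.single (n+r) 1) (Δn n) =
      -8 * (((2*n).factorial : ℤ) * ((n+r-1).factorial : ℤ) * ((n+1-r).factorial : ℤ))^2 *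
        Efun (n+2) r ∧
    ∀ p : ℕ, p.Prime → Odd p →
      padicValInt p (MvPolynomial.coeff
        (Finsupp.single (n+1-r) 1 + Finsupp.single (n+2-r) 1 +
         Finsupp.single (n-1+r) 1 + Finsupp.single (n+r) 1) (Δn n)) % 2 =
      padicValInt p (Efun (n+2) r) % 2 :=
  stmt3_general n r hr1 hr2
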